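/- arXiv:2506.07846 — 6 statements merged into one kernel-verified Lean document; each statement's English description precedes it below -/
import Mathlib

section
/- Let C be a linear [n,k,d] code over F_q with k ≥ 2 and let a be a codeword of C of minimum weight d. Then the residual code Res(C,a), obtained by puncturing C at the support of a, is a linear code of length n−d, dimension k−1, and minimum distance at least ⌈d/q⌉. -/
/-!
Let `a ∈ C` have minimum weight `d`, let `res` be the puncturing at `supp a`, and take `c ∈ C`
outside `F ∙ a`. By pigeonhole, some `l ∈ F` satisfies `c i = l * a i` on at least `d / q`
coordinates of `supp a`, and minimality applied to `c - l • a` gives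
`d ≤ wt (c - l • a) = wt (res c) + d - #{those coordinates}`, so `d ≤ q * wt (res c)`.
In particular `res c ≠ 0`, so the kernel of `res` on `C` is `F ∙ a`, which gives the
dimension `k - 1`.
-/

/-- Hamming weight of a vector. -/
noncomputable def wt {ι F : Type*} [Zero F] (c : ι → F) : ℕ :=
  Nat.card {i // c i ≠ 0}

/-- Griesmer sum `g_q(k,d) = ∑_{i<k} ⌈d / q^i⌉` (using `(d + q^i - 1)/q^i`). -/
def gbound (q k d : ℕ) : ℕ :=
  ∑ i ∈ Finset.range k, (d + q ^ i - 1) / q ^ i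

open Finset

section Weight

variable {ι F : Type*} [Fintype ι]

theorem wt_eq_card_filter [Zero F] (c : ι → F) [DecidablePred fun i => c i ≠ 0] :
    wt c = #{i | c i ≠ 0} := by
  rw [wt, Nat.card_eq_fintype_card, Fintype.card_subtype]

theorem wt_eq_zero_iff [Zero F] {c : ι → F} : wt c = 0 ↔ c = 0 := by
  classical
  rw [wt_eq_card_filter, card_eq_zero, filter_eq_empty_iff, funext_iff]
  simp

theorem wt_pos_iff [Zero F] {c : ι → F} : 0 < wt c ↔ c ≠ 0 :=
  Nat.pos_iff_ne_zero.trans wt_eq_zero_iff.not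

theorem card_zeroSet [Zero F] (c : ι → F) :
    Nat.card {i // c i = 0} = Fintype.card ι - wt c := by
  classical
  rw [wt_eq_card_filter, Nat.card_eq_fintype_card, Fintype.card_subtype, ← card_univ,
    ← card_filter_add_card_filter_not (s := univ) fun i => c i = 0]
  simp

end Weight

section Residual

variable {ι F : Type*} [Field F]

/-- `C.map (residualMap a)` is the residual code `Res(C, a)`. -/
abbrev residualMap (a : ι → F) : (ι → F) →ₗ[F] ({i // a i = 0} → F) :=
  LinearMap.funLeft F F Subtype.val

theorem residualMap_self (a : ι → F) : residualMap a a = 0 :=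
  funext fun i => i.prop

variable [Fintype ι]

theorem wt_residualMap [DecidableEq F] (a c : ι → F) :
    wt (residualMap a c) = #{i | a i = 0 ∧ c i ≠ 0} := by
  rw [← Fintype.card_subtype, ← Nat.card_eq_fintype_card]
  exact Nat.card_congr (Equiv.subtypeSubtypeEquivSubtypeInter (a · = 0) (c · ≠ 0))

theorem wt_sub_smul_add_card_eq [DecidableEq F] (a c : ι → F) (l : F) :
    wt (c - l • a) + #{i | a i ≠ 0 ∧ c i = l * a i} = wt (residualMap a c) + wt a := by
  have hsplit : wt (c - l • a) = wt (residualMap a c) + #{i | a i ≠ 0 ∧ c i ≠ l * a i} := by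
    rw [wt_residualMap, wt_eq_card_filter, ← card_filter_add_card_filter_not fun i => a i = 0,
      filter_filter, filter_filter]
    congr 2 <;> ext i <;> by_cases hi : a i = 0 <;> simp [hi, sub_eq_zero]
  rw [hsplit, add_assoc, wt_eq_card_filter a, ← filter_filter, ← filter_filter, add_comm (#_),
    card_filter_add_card_filter_not]

theorem exists_wt_le_card_mul_card_eq_smul [Fintype F] [DecidableEq F] (a c : ι → F) :
    ∃ l : F, wt a ≤ Fintype.card F * #{i | a i ≠ 0 ∧ c i = l * a i} := by
  classical
  obtain ⟨l, -, hl⟩ := exists_le_card_fiber_of_nsmul_le_card_of_maps_to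
    (s := {i | a i ≠ 0}) (t := univ) (f := fun i => c i / a i) (b := (wt a : ℚ) / Fintype.card F)
    (fun _ _ => mem_univ _) univ_nonempty (by
      rw [nsmul_eq_mul, card_univ, mul_div_cancel₀ _ (by positivity), wt_eq_card_filter])
  have hfiber : #{i ∈ {i | a i ≠ 0} | c i / a i = l} = #{i | a i ≠ 0 ∧ c i = l * a i} := by
    rw [filter_filter]
    exact congrArg card (filter_congr fun i _ => and_congr_right fun hi => div_eq_iff hi)
  rw [div_le_iff₀' (by positivity), hfiber] at hl
  exact ⟨l, by exact_mod_cast hl⟩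

variable [Fintype F] {C : Submodule F (ι → F)} {a c : ι → F}

theorem wt_le_card_mul_wt_residualMap (hmin : ∀ x ∈ C, x ≠ 0 → wt a ≤ wt x) (ha : a ∈ C)
    (hc : c ∈ C) (hca : ∀ l : F, c ≠ l • a) :
    wt a ≤ Fintype.card F * wt (residualMap a c) := by
  classical
  obtain ⟨l, hl⟩ := exists_wt_le_card_mul_card_eq_smul a c
  have hlmin := hmin _ (C.sub_mem hc (C.smul_mem l ha)) (sub_ne_zero.2 (hca l))
  have hcount := wt_sub_smul_add_card_eq a c l
  calc wt a ≤ Fintype.card F * #{i | a i ≠ 0 ∧ c i = l * a i} := hl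
    _ ≤ Fintype.card F * wt (residualMap a c) := Nat.mul_le_mul_left _ (by omega)

theorem exists_eq_smul_of_residualMap_eq_zero (hmin : ∀ x ∈ C, x ≠ 0 → wt a ≤ wt x)
    (ha : a ∈ C) (ha0 : a ≠ 0) (hc : c ∈ C) (hres : residualMap a c = 0) : ∃ l : F, c = l • a := by
  classical
  by_contra! hca
  have := wt_le_card_mul_wt_residualMap hmin ha hc hca
  rw [hres, wt_eq_zero_iff.2 rfl, mul_zero, Nat.le_zero, wt_eq_zero_iff] at this
  exact ha0 this

theorem ker_residualMap_domRestrict (hmin : ∀ x ∈ C, x ≠ 0 → wt a ≤ wt x) (ha : a ∈ C)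
    (ha0 : a ≠ 0) : LinearMap.ker ((residualMap a).domRestrict C) = F ∙ ⟨a, ha⟩ := by
  ext ⟨x, hx⟩
  simp only [LinearMap.mem_ker, LinearMap.domRestrict_apply, Submodule.mem_span_singleton,
    SetLike.mk_smul_mk, Subtype.mk.injEq]
  constructor
  · intro hres
    obtain ⟨l, rfl⟩ := exists_eq_smul_of_residualMap_eq_zero hmin ha ha0 hx hres
    exact ⟨l, rfl⟩
  · rintro ⟨l, rfl⟩
    rw [map_smul, residualMap_self, smul_zero]

theorem finrank_map_residualMap_add_one (hmin : ∀ x ∈ C, x ≠ 0 → wt a ≤ wt x) (ha : a ∈ C)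
    (ha0 : a ≠ 0) : Module.finrank F (C.map (residualMap a)) + 1 = Module.finrank F C := by
  rw [← LinearMap.finrank_range_add_finrank_ker ((residualMap a).domRestrict C),
    LinearMap.range_domRestrict, ker_residualMap_domRestrict hmin ha ha0,
    finrank_span_singleton (by simpa using ha0)]

theorem wt_le_card_mul_wt_of_mem_map_residualMap (hmin : ∀ x ∈ C, x ≠ 0 → wt a ≤ wt x)
    (ha : a ∈ C) {c' : {i // a i = 0} → F} (hc' : c' ∈ C.map (residualMap a)) (hc'0 : c' ≠ 0) :
    wt a ≤ Fintype.card F * wt c' := by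
  obtain ⟨c, hc, rfl⟩ := hc'
  refine wt_le_card_mul_wt_residualMap hmin ha hc fun l hcl => hc'0 ?_
  rw [hcl, map_smul, residualMap_self, smul_zero]

end Residual

theorem stmt0_general {F : Type*} [Field F] [Fintype F] {n k d : ℕ}
    (C : Submodule F (Fin n → F))
    (hk : Module.finrank F C = k)
    (hmin : ∀ c ∈ C, c ≠ 0 → d ≤ wt c)
    (hex : ∃ c ∈ C, c ≠ 0 ∧ wt c = d)
    (a : Fin n → F) (haC : a ∈ C) (haw : wt a = d) :
    Nat.card {i : Fin n // a i = 0} = n - d ∧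
    Module.finrank F
      (C.map (LinearMap.funLeft F F (Subtype.val : {i : Fin n // a i = 0} → Fin n))) = k - 1 ∧
    ∀ c' ∈ C.map (LinearMap.funLeft F F (Subtype.val : {i : Fin n // a i = 0} → Fin n)),
      c' ≠ 0 → (d + Fintype.card F - 1) / Fintype.card F ≤ wt c' := by
  have hd : 0 < d := by
    obtain ⟨c, -, hc, rfl⟩ := hex
    exact wt_pos_iff.2 hc
  subst haw
  have ha0 : a ≠ 0 := wt_pos_iff.1 hd
  refine ⟨by rw [card_zeroSet, Fintype.card_fin], ?_, fun c' hc' hc'0 => ?_⟩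
  · rw [← hk, ← finrank_map_residualMap_add_one hmin haC ha0, Nat.add_sub_cancel]
  · have hbound := wt_le_card_mul_wt_of_mem_map_residualMap hmin haC hc' hc'0
    rw [Nat.div_le_iff_le_mul_add_pred Fintype.card_pos]
    omega

theorem stmt0 {F : Type*} [Field F] [Fintype F] {n k d : ℕ}
    (C : Submodule F (Fin n → F))
    (hk : Module.finrank F C = k) (hk2 : 2 ≤ k)
    (hmin : ∀ c ∈ C, c ≠ 0 → d ≤ wt c)
    (hex : ∃ c ∈ C, c ≠ 0 ∧ wt c = d)
    (a : Fin n → F) (haC : a ∈ C) (haw : wt a = d) :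
    Nat.card {i : Fin n // a i = 0} = n - d ∧
    Module.finrank F
      (C.map (LinearMap.funLeft F F (Subtype.val : {i : Fin n // a i = 0} → Fin n))) = k - 1 ∧
    ∀ c' ∈ C.map (LinearMap.funLeft F F (Subtype.val : {i : Fin n // a i = 0} → Fin n)),
      c' ≠ 0 → (d + Fintype.card F - 1) / Fintype.card F ≤ wt c' :=
  stmt0_general C hk hmin hex a haC haw
end

section
/- Let C be an [n,k,d] Griesmer code over F_q, i.e., n = Σ_{i=0}^{k-1} ⌈d/q^i⌉. Then the maximum point multiplicity of the multiset of columns of a generator matrix of C (viewed in PG(k−1,q)) equals exactly ⌈d/q^{k−1}⌉. -/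
/-!
Columns `c : ι → V` of a generator matrix turn codewords into linear functionals `f` on `V`, the
weight of `f` being the number of columns outside `ker f`. If `f` has minimum weight `d`, the
weights of the `q` codewords `g - λ f` add up to `q · wt(g|ker f) + (q - 1) d`, so the columns in
`ker f` (the residual code) have minimum distance at least `⌈d/q⌉`; induction on the dimension
gives the Griesmer bound `n ≥ g_q(k, d)`.

Projecting from a point `⟨v⟩` discards the columns in `⟨v⟩` and keeps minimum distance `d` in
dimension `k - 1`, so `n - mult(v) ≥ g_q(k - 1, d)`, that is `mult(v) ≤ ⌈d/q^(k-1)⌉`.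

For a Griesmer code the residual code of a minimum-weight codeword has length
`n - d = g_q(k - 1, ⌈d/q⌉)`, hence, by the bound, minimum distance exactly `⌈d/q⌉`: it is again
Griesmer. Its points keep their multiplicities and `⌈⌈d/q⌉/q^(k-2)⌉ = ⌈d/q^(k-1)⌉`, so induction
down to dimension one, where the single point has multiplicity `d`, produces a point of
multiplicity `⌈d/q^(k-1)⌉`.
-/

open Finset Module

lemma ceilDiv_ceilDiv {a b : ℕ} (ha : 0 < a) (hb : 0 < b) (d : ℕ) :
    d ⌈/⌉ a ⌈/⌉ b = d ⌈/⌉ (a * b) :=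
  eq_of_forall_ge_iff fun c => by
    rw [ceilDiv_le_iff_le_mul hb, ceilDiv_le_iff_le_mul ha,
      ceilDiv_le_iff_le_mul (mul_pos ha hb), mul_assoc]

lemma ceilDiv_mono {a : ℕ} (ha : 0 < a) : Monotone (· ⌈/⌉ a : ℕ → ℕ) :=
  (gc_mul_ceilDiv ha).monotone_l

lemma gbound_eq_sum_ceilDiv (q k d : ℕ) : gbound q k d = ∑ i ∈ range k, d ⌈/⌉ q ^ i := rfl

lemma gbound_succ (q k d : ℕ) : gbound q (k + 1) d = gbound q k d + d ⌈/⌉ q ^ k :=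
  sum_range_succ _ _

lemma gbound_succ' {q : ℕ} (hq : 0 < q) (k d : ℕ) :
    gbound q (k + 1) d = d + gbound q k (d ⌈/⌉ q) := by
  simp only [gbound_eq_sum_ceilDiv, sum_range_succ', pow_zero, ceilDiv_one, pow_succ',
    ← ceilDiv_ceilDiv hq (pow_pos hq _), add_comm d]

lemma gbound_mono {q : ℕ} (hq : 0 < q) (k : ℕ) : Monotone (gbound q k) := fun _ _ h =>
  sum_le_sum fun i _ => ceilDiv_mono (pow_pos hq i) h

lemma gbound_strictMono {q : ℕ} (hq : 0 < q) (k : ℕ) : StrictMono (gbound q (k + 1)) := by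
  intro d d' h
  rw [gbound_succ' hq, gbound_succ' hq]
  exact add_lt_add_of_lt_of_le h (gbound_mono hq k (ceilDiv_mono hq h.le))

lemma card_subtype_add_card_subtype_not {ι : Type*} [Finite ι] (P : ι → Prop) :
    Nat.card {j // P j} + Nat.card {j // ¬P j} = Nat.card ι := by
  classical
  have := Fintype.ofFinite ι
  simp only [Nat.card_eq_fintype_card, Fintype.card_subtype_compl]
  have := Fintype.card_subtype_le P
  omega

lemma wt_comp_subtype_val {ι M : Type*} [Zero M] {P : ι → Prop} {x : ι → M}
    (h : ∀ j, x j ≠ 0 → P j) : wt (fun j : {j // P j} => x j) = wt x :=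
  Nat.card_congr (Equiv.subtypeSubtypeEquivSubtype (h _))

lemma sum_ite_sub_mul_ne_zero {F : Type*} [Field F] [Fintype F] [DecidableEq F] (x y : F) :
    (∑ l : F, if y - l * x ≠ 0 then 1 else 0) =
      Fintype.card F * (if x = 0 ∧ y ≠ 0 then 1 else 0) +
        (Fintype.card F - 1) * (if x ≠ 0 then 1 else 0) := by
  rw [← card_filter]
  by_cases hx : x = 0
  · by_cases hy : y = 0 <;> simp [hx, hy]
  · have : univ.filter (fun l => y - l * x ≠ 0) = univ.erase (y / x) := by
      ext l
      simp [sub_eq_zero, eq_div_iff hx, eq_comm]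
    simp [this, hx, card_erase_of_mem]

noncomputable def pointMult (F : Type*) {V ι : Type*} [Zero F] [SMul F V] (c : ι → V) (v : V) : ℕ :=
  Nat.card {j // ∃ lam : F, lam ≠ 0 ∧ c j = lam • v}

section
variable {F V ι : Type*} [Field F] [AddCommGroup V] [Module F V]

def restrictToKer (c : ι → V) (f : Dual F V) : {j // f (c j) = 0} → LinearMap.ker f :=
  fun j => ⟨c j, j.2⟩

lemma sum_wt_sub_smul [Fintype F] [Finite ι] (c : ι → V) (f g : Dual F V) :
    ∑ l : F, wt ((g - l • f) ∘ c) =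
      Fintype.card F * Nat.card {j // f (c j) = 0 ∧ g (c j) ≠ 0} +
        (Fintype.card F - 1) * wt (f ∘ c) := by
  classical
  have := Fintype.ofFinite ι
  have card_eq_sum (P : ι → Prop) [DecidablePred P] :
      Nat.card {j // P j} = ∑ j, if P j then 1 else 0 := by
    rw [Nat.card_eq_fintype_card, Fintype.card_subtype, card_filter]
  simp only [wt, card_eq_sum, Function.comp_apply, LinearMap.sub_apply, LinearMap.smul_apply,
    smul_eq_mul]
  rw [sum_comm, mul_sum, mul_sum, ← sum_add_distrib]
  exact sum_congr rfl fun j _ => sum_ite_sub_mul_ne_zero _ _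

lemma wt_comp_restrictToKer (c : ι → V) (f g : Dual F V) :
    wt (g.comp (LinearMap.ker f).subtype ∘ restrictToKer c f) =
      Nat.card {j // f (c j) = 0 ∧ g (c j) ≠ 0} :=
  Nat.card_congr <|
    Equiv.subtypeSubtypeEquivSubtypeInter (fun j => f (c j) = 0) (fun j => g (c j) ≠ 0)

lemma ceilDiv_le_wt_restrictToKer [Fintype F] [Finite ι] {c : ι → V} {f : Dual F V} {d : ℕ}
    (hmin : ∀ g : Dual F V, g ≠ 0 → d ≤ wt (g ∘ c)) (hf : wt (f ∘ c) = d)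
    {g' : Dual F (LinearMap.ker f)} (hg' : g' ≠ 0) :
    d ⌈/⌉ Fintype.card F ≤ wt (g' ∘ restrictToKer c f) := by
  obtain ⟨g, hg⟩ := LinearMap.exists_extend g'
  have hne : ∀ l : F, g - l • f ≠ 0 := fun l h => hg' <| by
    rw [← hg, ← sub_add_cancel g (l • f), h, zero_add]
    ext x
    simp [LinearMap.mem_ker.mp x.2]
  obtain ⟨q, hq⟩ : ∃ q, Fintype.card F = q + 1 := Nat.exists_eq_add_one.mpr Fintype.card_pos
  have hsum : (q + 1) * d ≤ (q + 1) * wt (g' ∘ restrictToKer c f) + q * d := by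
    calc (q + 1) * d = ∑ _l : F, d := by simp [hq]
      _ ≤ ∑ l : F, wt ((g - l • f) ∘ c) := sum_le_sum fun l _ => hmin _ (hne l)
      _ = _ := by rw [sum_wt_sub_smul, hf, hq, ← hg, wt_comp_restrictToKer, Nat.add_sub_cancel]
  rw [hq, ceilDiv_le_iff_le_mul q.succ_pos]
  linarith

lemma exists_wt_min [Nontrivial V] [FiniteDimensional F V] (c : ι → V) :
    ∃ f : Dual F V, f ≠ 0 ∧ ∀ g : Dual F V, g ≠ 0 → wt (f ∘ c) ≤ wt (g ∘ c) := by
  obtain ⟨f, hf⟩ := exists_ne (0 : Dual F V)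
  exact ⟨_, Function.argminOn_mem _ {g | g ≠ 0} ⟨f, hf⟩,
    fun g hg => Function.argminOn_le (fun g : Dual F V => wt (g ∘ c)) {g | g ≠ 0} hg⟩

theorem gbound_le_card [Fintype F] [FiniteDimensional F V] [Finite ι] {c : ι → V} {d : ℕ}
    (hmin : ∀ f : Dual F V, f ≠ 0 → d ≤ wt (f ∘ c)) :
    gbound (Fintype.card F) (finrank F V) d ≤ Nat.card ι := by
  generalize hk : finrank F V = k
  induction k generalizing V ι d with
  | zero => simp [gbound]
  | succ k ih =>
    have hq : 0 < Fintype.card F := Fintype.card_pos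
    have : Nontrivial V := Module.nontrivial_of_finrank_eq_succ hk
    obtain ⟨f, hf, hfmin⟩ := exists_wt_min (F := F) c
    have hker : finrank F (LinearMap.ker f) = k := by
      have := f.finrank_ker_add_one_of_ne_zero hf
      omega
    have hres := ih (c := restrictToKer c f) (d := wt (f ∘ c) ⌈/⌉ Fintype.card F)
      (fun g hg => ceilDiv_le_wt_restrictToKer hfmin rfl hg) hker
    calc gbound (Fintype.card F) (k + 1) d
        ≤ gbound (Fintype.card F) (k + 1) (wt (f ∘ c)) := gbound_mono hq _ (hmin f hf)
      _ = wt (f ∘ c) + gbound (Fintype.card F) k (wt (f ∘ c) ⌈/⌉ Fintype.card F) :=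
        gbound_succ' hq _ _
      _ ≤ wt (f ∘ c) + Nat.card {j // f (c j) = 0} := by gcongr
      _ = Nat.card ι := by rw [add_comm]; exact card_subtype_add_card_subtype_not _

lemma pointMult_le_card_mem_span [Finite ι] (c : ι → V) (v : V) :
    pointMult F c v ≤ Nat.card {j // c j ∈ F ∙ v} :=
  Nat.card_le_card_of_injective _ (Subtype.impEmbedding _ _ fun _ ⟨lam, _, hj⟩ =>
    hj ▸ Submodule.smul_mem _ lam (Submodule.mem_span_singleton_self v)).injective

lemma pointMult_add_gbound_le [Fintype F] [FiniteDimensional F V] [Finite ι] {c : ι → V}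
    {d k : ℕ} (hmin : ∀ f : Dual F V, f ≠ 0 → d ≤ wt (f ∘ c)) (hk : finrank F V = k + 1)
    {v : V} (hv : v ≠ 0) :
    pointMult F c v + gbound (Fintype.card F) k d ≤ Nat.card ι := by
  set p := F ∙ v
  have hquot : finrank F (V ⧸ p) = k := by
    have := p.finrank_quotient_add_finrank
    rw [finrank_span_singleton hv] at this
    omega
  have hproj : gbound (Fintype.card F) k d ≤ Nat.card {j // c j ∉ p} := by
    rw [← hquot]
    refine gbound_le_card (c := fun j : {j // c j ∉ p} => p.mkQ (c j)) fun g hg => ?_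
    have hg' : g.comp p.mkQ ≠ 0 := fun h =>
      hg <| (LinearMap.cancel_right p.mkQ_surjective).mp (h.trans (LinearMap.zero_comp _).symm)
    calc d ≤ wt (g.comp p.mkQ ∘ c) := hmin _ hg'
      _ = _ := (wt_comp_subtype_val (P := fun j => c j ∉ p) fun j hj hjp => hj ?_).symm
    simp [(Submodule.Quotient.mk_eq_zero p).mpr hjp]
  have := card_subtype_add_card_subtype_not fun j => c j ∈ p
  have : pointMult F c v ≤ Nat.card {j // c j ∈ p} := pointMult_le_card_mem_span c v
  omega

lemma pointMult_eq_wt_of_finrank_eq_one (hV : finrank F V = 1) {f : Dual F V} (hf : f ≠ 0)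
    (c : ι → V) {v : V} (hv : v ≠ 0) : pointMult F c v = wt (f ∘ c) := by
  have hmul := (finrank_eq_one_iff_of_nonzero' v hv).mp hV
  have hfv : f v ≠ 0 := fun h => hf <| LinearMap.ext fun w => by
    obtain ⟨a, rfl⟩ := hmul w
    simp [h]
  refine Nat.card_congr (Equiv.subtypeEquivRight fun j => ?_)
  obtain ⟨a, ha⟩ := hmul (c j)
  rw [Function.comp_apply, ← ha, map_smul, smul_eq_mul, mul_ne_zero_iff, and_iff_left hfv]
  constructor
  · rintro ⟨b, hb, hab⟩
    rwa [smul_left_injective F hv hab]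
  · exact fun ha => ⟨a, ha, rfl⟩

lemma pointMult_restrictToKer (c : ι → V) (f : Dual F V) (v : LinearMap.ker f) :
    pointMult F (restrictToKer c f) v = pointMult F c v := by
  refine Nat.card_congr ((Equiv.subtypeEquivRight fun j => ?_).trans
    (Equiv.subtypeSubtypeEquivSubtype fun {j} ⟨lam, _, hj⟩ => ?_))
  · simp only [restrictToKer, Subtype.ext_iff, Submodule.coe_smul]
  · rw [hj, map_smul, LinearMap.mem_ker.mp v.2, smul_zero]

lemma exists_wt_eq_of_card_eq_gbound [Fintype F] [Nontrivial V] [FiniteDimensional F V]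
    [Finite ι] {c : ι → V} {d : ℕ}
    (hn : Nat.card ι = gbound (Fintype.card F) (finrank F V) d)
    (hmin : ∀ f : Dual F V, f ≠ 0 → d ≤ wt (f ∘ c)) :
    ∃ f : Dual F V, f ≠ 0 ∧ wt (f ∘ c) = d := by
  obtain ⟨f, hf, hfmin⟩ := exists_wt_min (F := F) c
  refine ⟨f, hf, le_antisymm ?_ (hmin f hf)⟩
  obtain ⟨k, hk⟩ := Nat.exists_eq_succ_of_ne_zero (finrank_pos (R := F) (M := V)).ne'
  have hbound := gbound_le_card hfmin
  rw [hk] at hbound hn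
  exact (gbound_strictMono Fintype.card_pos k).le_iff_le.mp (hbound.trans hn.le)

theorem exists_pointMult_eq [Fintype F] [FiniteDimensional F V] [Finite ι] {c : ι → V}
    {d k : ℕ} (hk : finrank F V = k + 1)
    (hn : Nat.card ι = gbound (Fintype.card F) (k + 1) d)
    (hmin : ∀ f : Dual F V, f ≠ 0 → d ≤ wt (f ∘ c)) {f : Dual F V} (hf : f ≠ 0)
    (hfd : wt (f ∘ c) = d) :
    ∃ v : V, v ≠ 0 ∧ pointMult F c v = d ⌈/⌉ Fintype.card F ^ k := by
  have hq : 0 < Fintype.card F := Fintype.card_pos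
  induction k generalizing V ι d f with
  | zero =>
    have : Nontrivial V := Module.nontrivial_of_finrank_eq_succ hk
    obtain ⟨v, hv⟩ := exists_ne (0 : V)
    exact ⟨v, hv, by rw [pointMult_eq_wt_of_finrank_eq_one hk hf c hv, hfd, pow_zero, ceilDiv_one]⟩
  | succ k ih =>
    have hker : finrank F (LinearMap.ker f) = k + 1 := by
      have := f.finrank_ker_add_one_of_ne_zero hf
      omega
    have : Nontrivial (LinearMap.ker f) := Module.nontrivial_of_finrank_eq_succ hker
    have hn' : Nat.card {j // f (c j) = 0} =
        gbound (Fintype.card F) (k + 1) (d ⌈/⌉ Fintype.card F) := by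
      have := card_subtype_add_card_subtype_not fun j => f (c j) = 0
      rw [gbound_succ' hq] at hn
      change _ + wt (f ∘ c) = _ at this
      omega
    have hmin' : ∀ g : Dual F (LinearMap.ker f), g ≠ 0 →
        d ⌈/⌉ Fintype.card F ≤ wt (g ∘ restrictToKer c f) :=
      fun g hg => ceilDiv_le_wt_restrictToKer hmin hfd hg
    obtain ⟨g, hg, hgd⟩ := exists_wt_eq_of_card_eq_gbound (hker ▸ hn') hmin'
    obtain ⟨v, hv, hmult⟩ := ih hker hn' hmin' hg hgd
    refine ⟨v, by simpa using hv, ?_⟩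
    rw [← pointMult_restrictToKer, hmult, ceilDiv_ceilDiv hq (pow_pos hq _), pow_succ']

theorem pointMult_le [Fintype F] [FiniteDimensional F V] [Finite ι] {c : ι → V}
    {d k : ℕ} (hk : finrank F V = k + 1)
    (hn : Nat.card ι = gbound (Fintype.card F) (k + 1) d)
    (hmin : ∀ f : Dual F V, f ≠ 0 → d ≤ wt (f ∘ c)) {v : V} (hv : v ≠ 0) :
    pointMult F c v ≤ d ⌈/⌉ Fintype.card F ^ k := by
  have := pointMult_add_gbound_le hmin hk hv
  rw [hn, gbound_succ] at this
  omega

end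

theorem stmt3_general {F : Type*} [Field F] [Fintype F] {n k d : ℕ}
    (G : Matrix (Fin k) (Fin n) F)
    (hn : n = gbound (Fintype.card F) k d)
    (hmin : ∀ a : Fin k → F, a ≠ 0 → d ≤ wt (Matrix.vecMul a G))
    (hex : ∃ a : Fin k → F, a ≠ 0 ∧ wt (Matrix.vecMul a G) = d) :
    (∃ v : Fin k → F, v ≠ 0 ∧
      Nat.card {j : Fin n // ∃ lam : F, lam ≠ 0 ∧ (fun i => G i j) = lam • v} =
        (d + Fintype.card F ^ (k - 1) - 1) / Fintype.card F ^ (k - 1)) ∧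
    ∀ v : Fin k → F, v ≠ 0 →
      Nat.card {j : Fin n // ∃ lam : F, lam ≠ 0 ∧ (fun i => G i j) = lam • v} ≤
        (d + Fintype.card F ^ (k - 1) - 1) / Fintype.card F ^ (k - 1) := by
  let e := dotProductEquiv F (Fin k)
  have hcode (a : Fin k → F) : Matrix.vecMul a G = e a ∘ G.transpose := rfl
  have hmin' (f : Dual F (Fin k → F)) (hf : f ≠ 0) : d ≤ wt (f ∘ G.transpose) := by
    simpa [hcode] using hmin (e.symm f) (by simpa using hf)
  obtain ⟨a, ha, had⟩ := hex
  obtain ⟨k, rfl⟩ : ∃ k', k = k' + 1 :=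
    Nat.exists_eq_succ_of_ne_zero fun hk => ha (by subst hk; exact Subsingleton.elim _ _)
  have hcard : Nat.card (Fin n) = gbound (Fintype.card F) (k + 1) d := by rw [Nat.card_fin, hn]
  have hrank : finrank F (Fin (k + 1) → F) = k + 1 := Module.finrank_fin_fun F
  rw [Nat.add_sub_cancel]
  exact ⟨exists_pointMult_eq hrank hcard hmin' (e.map_ne_zero_iff.mpr ha) had,
    fun v hv => pointMult_le hrank hcard hmin' hv⟩

theorem stmt3 {F : Type*} [Field F] [Fintype F] {n k d : ℕ}
    (G : Matrix (Fin k) (Fin n) F)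
    (hinj : Function.Injective fun a : Fin k → F => Matrix.vecMul a G)
    (hcol : ∀ j, (fun i => G i j) ≠ 0)
    (hn : n = gbound (Fintype.card F) k d)
    (hmin : ∀ a : Fin k → F, a ≠ 0 → d ≤ wt (Matrix.vecMul a G))
    (hex : ∃ a : Fin k → F, a ≠ 0 ∧ wt (Matrix.vecMul a G) = d) :
    (∃ v : Fin k → F, v ≠ 0 ∧
      Nat.card {j : Fin n // ∃ lam : F, lam ≠ 0 ∧ (fun i => G i j) = lam • v} =
        (d + Fintype.card F ^ (k - 1) - 1) / Fintype.card F ^ (k - 1)) ∧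
    ∀ v : Fin k → F, v ≠ 0 →
      Nat.card {j : Fin n // ∃ lam : F, lam ≠ 0 ∧ (fun i => G i j) = lam • v} ≤
        (d + Fintype.card F ^ (k - 1) - 1) / Fintype.card F ^ (k - 1) :=
  stmt3_general G hn hmin hex
end

section
/- Let C be a Griesmer [g_q(k,d),k,d] code over F_q with q^{k−1} dividing d. Then every nonzero codeword of C has weight exactly d. -/
/-!
Double counting over the coordinates: the `i`-th coordinate functional of a `k`-dimensional code
vanishes on a subspace of dimension at least `k - 1`, so at most `q^k - q^(k-1)` codewords are
nonzero there, and the codewords have total weight at most `n (q^k - q^(k-1))`. When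
`q^(k-1) ∣ d` every ceiling in the Griesmer sum is exact, and this bound equals `d (q^k - 1)`,
which is exactly what the `q^k - 1` nonzero codewords of weight at least `d` already contribute.
Hence none of them can have weight larger than `d`.
-/

open Finset Module

theorem Nat.geom_sum_mul_sub_one {q : ℕ} (hq : 0 < q) (k : ℕ) :
    (∑ i ∈ range k, q ^ i) * (q - 1) = q ^ k - 1 := by
  have := geom_sum_mul_add (q - 1) k
  rw [Nat.sub_one_add_one hq.ne'] at this
  omega

theorem gbound_eq_sum_div {q k d : ℕ} (hq : 0 < q) (hd : q ^ (k - 1) ∣ d) :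
    gbound q k d = ∑ i ∈ range k, d / q ^ i := by
  refine sum_congr rfl fun i hi => ?_
  have hqi : q ^ i ∣ d := (pow_dvd_pow q (by grind)).trans hd
  rw [Nat.add_sub_assoc (Nat.one_le_pow _ _ hq), Nat.add_div_of_dvd_right hqi,
    Nat.div_eq_of_lt (Nat.sub_lt (Nat.pow_pos hq) one_pos), add_zero]

theorem gbound_mul_eq {q k d : ℕ} (hq : 0 < q) (hd : q ^ (k - 1) ∣ d) :
    gbound q k d * (q ^ k - q ^ (k - 1)) = d * (q ^ k - 1) := by
  rcases Nat.eq_zero_or_pos k with rfl | hk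
  · simp [gbound]
  obtain ⟨m, rfl⟩ := hd
  have hterm : ∀ i ∈ range k, q ^ (k - 1) * m / q ^ i = m * q ^ (k - 1 - i) := fun i hi =>
    Nat.div_eq_of_eq_mul_left (Nat.pow_pos hq) <| by
      rw [mul_comm m, mul_right_comm, ← pow_add, Nat.sub_add_cancel (by grind)]
  have hpow : q ^ k - q ^ (k - 1) = q ^ (k - 1) * (q - 1) := by
    rw [Nat.mul_sub_one, ← pow_succ, Nat.sub_add_cancel hk]
  rw [gbound_eq_sum_div hq (dvd_mul_right _ _), sum_congr rfl hterm, ← mul_sum,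
    sum_range_reflect (q ^ ·) k, hpow, mul_mul_mul_comm, Nat.geom_sum_mul_sub_one hq, mul_comm m]

theorem LinearMap.natCard_apply_ne_zero_le {F V : Type*} [Field F] [Fintype F] [AddCommGroup V]
    [Module F V] [Finite V] (f : V →ₗ[F] F) :
    Nat.card {v // f v ≠ 0} ≤
      Fintype.card F ^ finrank F V - Fintype.card F ^ (finrank F V - 1) := by
  classical
  have : Fintype V := Fintype.ofFinite V
  have hker : Nat.card {v // f v = 0} = Fintype.card F ^ finrank F (ker f) := by
    rw [← Nat.card_eq_fintype_card, ← Module.natCard_eq_pow_finrank]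
    exact Nat.card_congr (Equiv.subtypeEquivRight fun v => mem_ker.symm)
  have hrank : finrank F V - 1 ≤ finrank F (ker f) := by
    have := finrank_range_add_finrank_ker f
    have := (range f).finrank_le.trans_eq (finrank_self F)
    omega
  have hcompl : Nat.card {v // f v ≠ 0} = Nat.card V - Nat.card {v // f v = 0} := by
    simp only [Nat.card_eq_fintype_card, Fintype.card_subtype_compl]
  rw [hcompl, hker, Nat.card_eq_fintype_card, Module.card_eq_pow_finrank (K := F)]
  exact Nat.sub_le_sub_left (Nat.pow_le_pow_right Fintype.card_pos hrank) _

theorem sum_wt_eq_sum_natCard {α ι F : Type*} [Fintype α] [Fintype ι] [Zero F]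
    (g : α → ι → F) :
    ∑ a, wt (g a) = ∑ i, Nat.card {a // g a i ≠ 0} := by
  classical
  simp only [wt, Nat.card_eq_fintype_card, Fintype.card_subtype, card_filter]
  exact sum_comm

theorem Submodule.sum_wt_le {F ι : Type*} [Field F] [Fintype F] [Fintype ι]
    (C : Submodule F (ι → F)) [Fintype C] :
    ∑ v : C, wt (v : ι → F) ≤
      Fintype.card ι * (Fintype.card F ^ finrank F C - Fintype.card F ^ (finrank F C - 1)) := by
  rw [sum_wt_eq_sum_natCard]
  calc _ ≤ ∑ _i : ι, (Fintype.card F ^ finrank F C - Fintype.card F ^ (finrank F C - 1)) :=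
        sum_le_sum fun i _ => ((LinearMap.proj i).comp C.subtype).natCard_apply_ne_zero_le
    _ = _ := by rw [sum_const, card_univ, smul_eq_mul]

theorem Submodule.wt_eq_of_sum_wt_le {F ι : Type*} [Semiring F] (C : Submodule F (ι → F))
    [Fintype C] {d : ℕ} (hmin : ∀ c ∈ C, c ≠ 0 → d ≤ wt c)
    (hsum : ∑ v : C, wt (v : ι → F) ≤ d * (Fintype.card C - 1)) :
    ∀ c ∈ C, c ≠ 0 → wt c = d := by
  classical
  intro c hc hc0
  have hle : ∀ v ∈ univ.erase (0 : C), d ≤ wt (v : ι → F) := fun v hv =>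
    hmin v v.2 (by simpa using ne_of_mem_erase hv)
  have hsum_erase : ∑ v ∈ univ.erase (0 : C), wt (v : ι → F) = ∑ v : C, wt (v : ι → F) :=
    sum_erase _ (by simp [wt])
  have heq : ∑ _v ∈ univ.erase (0 : C), d = ∑ v ∈ univ.erase (0 : C), wt (v : ι → F) := by
    refine le_antisymm (sum_le_sum hle) ?_
    rw [sum_const, card_erase_of_mem (mem_univ _), card_univ, smul_eq_mul, mul_comm, hsum_erase]
    exact hsum
  exact ((sum_eq_sum_iff_of_le hle).1 heq ⟨c, hc⟩ (mem_erase.2 ⟨by simpa, mem_univ _⟩)).symm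

theorem stmt7_general {F : Type*} [Field F] [Fintype F] {n k d : ℕ}
    (C : Submodule F (Fin n → F))
    (hk : Module.finrank F C = k)
    (hn : n = gbound (Fintype.card F) k d)
    (hmin : ∀ c ∈ C, c ≠ 0 → d ≤ wt c)
    (hd : Fintype.card F ^ (k - 1) ∣ d) :
    ∀ c ∈ C, c ≠ 0 → wt c = d := by
  have : Fintype C := Fintype.ofFinite C
  refine C.wt_eq_of_sum_wt_le hmin ?_
  calc ∑ v : C, wt (v : Fin n → F)
      ≤ n * (Fintype.card F ^ k - Fintype.card F ^ (k - 1)) := by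
        simpa [hk] using C.sum_wt_le
    _ = d * (Fintype.card F ^ k - 1) := hn ▸ gbound_mul_eq Fintype.card_pos hd
    _ = d * (Fintype.card C - 1) := by rw [card_eq_pow_finrank (K := F) (V := C), hk]

theorem stmt7 {F : Type*} [Field F] [Fintype F] {n k d : ℕ}
    (C : Submodule F (Fin n → F))
    (hk : Module.finrank F C = k)
    (hn : n = gbound (Fintype.card F) k d)
    (hmin : ∀ c ∈ C, c ≠ 0 → d ≤ wt c)
    (hex : ∃ c ∈ C, c ≠ 0 ∧ wt c = d)
    (hd : Fintype.card F ^ (k - 1) ∣ d) :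
    ∀ c ∈ C, c ≠ 0 → wt c = d :=
  stmt7_general C hk hn hmin hd
end

section
/- Let p be prime, q = p^f, and n a positive integer with n ≥ 1. Then for 1 ≤ k ≤ q−1, the sum c(q−1,k;1) := Σ_{i ≥ 0, i ≡ k (mod q−1), 1 ≤ i ≤ (q−1)q} C((q−1)q, i) has p-adic valuation 0, i.e., is not divisible by p. -/
/-!
Modulo `p` one has `(1 + X) ^ ((q - 1) * q) = (1 + X ^ q) ^ (q - 1)`, so the only binomial
coefficients `C((q - 1) q, i)` surviving mod `p` are those with `q ∣ i`, where they reduce to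
`C(q - 1, i / q)`. Since `q ≡ 1 [MOD q - 1]`, the only multiple of `q` in the summation range
congruent to `k` is `q k`, so the sum is `C(q - 1, k)` mod `p`. Finally Pascal's rule and
`p ∣ C(q, j)` for `0 < j < q` give `C(q - 1, k) ≡ (-1) ^ k` mod `p`.
-/

open Polynomial

theorem Nat.cast_choose_prime_pow_mul {R : Type*} [CommRing R] {p : ℕ} [Fact p.Prime]
    [CharP R p] (n a i : ℕ) :
    ((p ^ n * a).choose i : R) = if p ^ n ∣ i then (a.choose (i / p ^ n) : R) else 0 := by
  have hfrob : (X + 1 : R[X]) ^ (p ^ n * a) = expand R (p ^ n) ((X + 1) ^ a) := by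
    rw [pow_mul, add_pow_char_pow, one_pow, map_pow, map_add, expand_X, map_one]
  rw [← coeff_X_add_one_pow, hfrob, coeff_expand (pow_pos (Fact.out : p.Prime).pos n),
    coeff_X_add_one_pow]

theorem Nat.cast_choose_prime_pow_sub_one {R : Type*} [Ring R] {p : ℕ} [CharP R p]
    (hp : p.Prime) {n k : ℕ} (hk : k < p ^ n) :
    (((p ^ n - 1).choose k : ℕ) : R) = (-1) ^ k := by
  induction k with
  | zero => simp
  | succ k ih =>
    have hpascal : (p ^ n).choose (k + 1) = (p ^ n - 1).choose k + (p ^ n - 1).choose (k + 1) := by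
      rw [← Nat.choose_succ_succ', Nat.sub_add_cancel (Nat.one_le_pow _ _ hp.pos)]
    have hzero : ((p ^ n).choose (k + 1) : R) = 0 :=
      (CharP.cast_eq_zero_iff R p _).2 (hp.dvd_choose_pow k.succ_ne_zero hk.ne)
    rw [hpascal, Nat.cast_add, ih (by omega)] at hzero
    rw [pow_succ, mul_neg_one]
    exact eq_neg_of_add_eq_zero_right hzero

theorem Nat.mul_modEq_sub_one {q : ℕ} (hq : 1 ≤ q) (m : ℕ) : q * m ≡ m [MOD q - 1] := by
  simpa using (Nat.modEq_sub hq).mul_right m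

theorem Nat.mul_mem_Icc_modEq_iff_eq {q k m : ℕ} (hk : k ∈ Finset.Icc 1 (q - 1)) :
    q * m ∈ Finset.Icc 1 ((q - 1) * q) ∧ q * m ≡ k [MOD q - 1] ↔ m = k := by
  rw [Finset.mem_Icc] at hk ⊢
  constructor
  · rintro ⟨⟨hpos, hle⟩, hmod⟩
    have hm1 : 1 ≤ m := Nat.pos_of_ne_zero (by rintro rfl; omega)
    have hm2 : m ≤ q - 1 := Nat.le_of_mul_le_mul_left (mul_comm (q - 1) q ▸ hle) (by omega)
    refine ((Nat.mul_modEq_sub_one (by omega) m).symm.trans hmod).eq_of_abs_lt ?_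
    rw [abs_lt]
    constructor <;> omega
  · rintro rfl
    refine ⟨⟨Nat.mul_pos (by omega) hk.1, ?_⟩, Nat.mul_modEq_sub_one (by omega) m⟩
    rw [mul_comm]
    exact Nat.mul_le_mul_right q hk.2

theorem stmt13_general {p f : ℕ} (hp : p.Prime) {k : ℕ}
    (hk1 : 1 ≤ k) (hk2 : k ≤ p ^ f - 1) :
    ¬ p ∣ ∑ i ∈ (Finset.Icc 1 ((p ^ f - 1) * p ^ f)).filter
        (fun i => i % (p ^ f - 1) = k % (p ^ f - 1)),
      ((p ^ f - 1) * p ^ f).choose i := by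
  have := Fact.mk hp
  set q := p ^ f
  have hk : k ∈ Finset.Icc 1 (q - 1) := Finset.mem_Icc.2 ⟨hk1, hk2⟩
  rw [← ZMod.natCast_eq_zero_iff, Nat.cast_sum, Finset.sum_eq_single (q * k)]
  · rw [mul_comm, Nat.cast_choose_prime_pow_mul, if_pos (dvd_mul_right _ _),
      Nat.mul_div_cancel_left _ (by omega), Nat.cast_choose_prime_pow_sub_one hp (by omega)]
    exact pow_ne_zero _ (neg_ne_zero.2 one_ne_zero)
  · intro i hi hne
    rw [mul_comm, Nat.cast_choose_prime_pow_mul, if_neg]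
    rintro ⟨m, rfl⟩
    exact hne (congrArg _ ((Nat.mul_mem_Icc_modEq_iff_eq hk).1 (Finset.mem_filter.1 hi)))
  · intro hnot
    exact absurd (Finset.mem_filter.2 ((Nat.mul_mem_Icc_modEq_iff_eq hk).2 rfl)) hnot

theorem stmt13 {p f : ℕ} (hp : p.Prime) (hf : 1 ≤ f) {k : ℕ}
    (hk1 : 1 ≤ k) (hk2 : k ≤ p ^ f - 1) :
    ¬ p ∣ ∑ i ∈ (Finset.Icc 1 ((p ^ f - 1) * p ^ f)).filter
        (fun i => i % (p ^ f - 1) = k % (p ^ f - 1)),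
      ((p ^ f - 1) * p ^ f).choose i :=
  stmt13_general hp hk1 hk2
end

section
/- Let p be prime, q = p^f, let 0 ≤ j ≤ f−1 and 0 ≤ r ≤ q−1−p^j. Then the p-adic valuation of the sum c(r+p^j, p^j; 1) := Σ_{a=0}^{q−1} C((r+p^j)q, a(q−1)+p^j) equals the p-adic valuation of C(r+p^j, p^j). -/
/-!
Write `n = r + p ^ j`, `q = p ^ f`, `t = ν_p C(n, p ^ j)` and `s` for the base-`p` digit sum.
The term `a = p ^ j` is `C(n q, p ^ j q)`, of valuation `t`, since multiplying by `q` does not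
change digit sums in Kummer's formula `(p - 1) ν_p C(m + k, k) = s(m) + s(k) - s(m + k)`.
Every other term is divisible by `p ^ (t + 1)`: write its lower index as `q A + u` with
`0 < u < q`. Kummer's formula together with `ν_p C(q, u) = f - ν_p(u)` gives
`(p - 1) ν_p C(n q, q A + u) = s(A) + s(n - 1 - A) - s(n) + (p - 1) (f - ν_p(u)) + 1`,
and `s(n) ≤ s(A) + s(n - 1 - A) + 1`, so this exceeds `(p - 1) t` when `ν_p(u) < f - t`.
Otherwise `ν_p(u) > j` because `t + j < f`; then `u > p ^ j` forces
`A = (q - u) + (p ^ j - 1)` with `p ^ ν_p(u) ∣ q - u`, and the `j` low digits `p - 1` of `A`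
make up the difference.
-/

namespace Nat

section DigitSum

variable {b : ℕ}

theorem digits_sum_base_pow_mul (hb : 1 < b) (k x : ℕ) :
    (b.digits (b ^ k * x)).sum = (b.digits x).sum := by
  rcases Nat.eq_zero_or_pos x with rfl | hx
  · simp
  · simp [digits_base_pow_mul hb hx]

theorem digits_sum_base_pow (hb : 1 < b) (k : ℕ) : (b.digits (b ^ k)).sum = 1 := by
  simpa [digits_of_lt b 1 one_ne_zero hb] using digits_sum_base_pow_mul hb k 1

theorem digits_sum_base_pow_mul_add (hb : 1 < b) {k u : ℕ} (x : ℕ) (hu : u < b ^ k) :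
    (b.digits (b ^ k * x + u)).sum = (b.digits x).sum + (b.digits u).sum := by
  rcases Nat.eq_zero_or_pos x with rfl | hx
  · simp
  have hlen : (b.digits u).length ≤ k := by
    rcases Nat.eq_zero_or_pos u with rfl | hu0
    · simp
    · rw [length_digits b u hb hu0.ne']
      exact log_lt_of_lt_pow hu0.ne' hu
  have h := digits_append_zeroes_append_digits (k := k - (b.digits u).length) hb hx (n := u)
  rw [Nat.add_sub_cancel' hlen] at h
  rw [add_comm, ← h]
  simp [add_comm]

theorem digits_sum_base_pow_sub_one (hb : 1 < b) (k : ℕ) :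
    (b.digits (b ^ k - 1)).sum = k * (b - 1) := by
  induction k with
  | zero => simp
  | succ k ih =>
    have hpos : 0 < b ^ k := pow_pos (by omega) k
    have hsplit : b ^ (k + 1) - 1 = b ^ k * (b - 1) + (b ^ k - 1) := by
      have : b ^ k ≤ b ^ k * b := Nat.le_mul_of_pos_right _ (by omega)
      rw [Nat.mul_sub_one, pow_succ]
      omega
    rw [hsplit, digits_sum_base_pow_mul_add hb _ (by omega), ih,
      digits_of_lt b (b - 1) (by omega) (by omega)]
    simp only [List.sum_singleton]
    ring

end DigitSum

section Kummer

variable {p : ℕ} [hp : Fact p.Prime]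

theorem sub_one_mul_padicValNat_choose_add_digits_sum (n k : ℕ) :
    (p - 1) * padicValNat p ((n + k).choose k) + (p.digits (n + k)).sum =
      (p.digits k).sum + (p.digits n).sum := by
  have hfac : (n + k)! = (n + k).choose k * k ! * n ! := by
    simpa using (choose_mul_factorial_mul_factorial (le_add_left k n)).symm
  have hval := congrArg (fun m => (p - 1) * padicValNat p m) hfac
  simp only [padicValNat.mul (mul_ne_zero (choose_pos (le_add_left k n)).ne' (factorial_ne_zero k))
    (factorial_ne_zero n), padicValNat.mul (choose_pos (le_add_left k n)).ne' (factorial_ne_zero k),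
    Nat.mul_add, sub_one_mul_padicValNat_factorial] at hval
  have := digit_sum_le p (n + k)
  have := digit_sum_le p n
  have := digit_sum_le p k
  omega

theorem digits_sum_add_le (n k : ℕ) :
    (p.digits (n + k)).sum ≤ (p.digits n).sum + (p.digits k).sum := by
  have := sub_one_mul_padicValNat_choose_add_digits_sum (p := p) n k
  omega

theorem digits_sum_add_digits_sum_pow_sub {f u : ℕ} (hu0 : u ≠ 0) (hu : u ≤ p ^ f) :
    (p.digits u).sum + (p.digits (p ^ f - u)).sum + (p - 1) * padicValNat p u =
      (p - 1) * f + 1 := by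
  have hkummer := sub_one_mul_padicValNat_choose_add_digits_sum (p := p) (p ^ f - u) u
  have hchoose := hp.out.emultiplicity_choose_prime_pow_add_emultiplicity hu hu0
  rw [← padicValNat_eq_emultiplicity (choose_pos hu).ne', ← padicValNat_eq_emultiplicity hu0]
    at hchoose
  rw [Nat.sub_add_cancel hu, digits_sum_base_pow hp.out.one_lt] at hkummer
  rw [← Nat.cast_add, Nat.cast_inj] at hchoose
  have : (p - 1) * padicValNat p ((p ^ f).choose u) + (p - 1) * padicValNat p u =
      (p - 1) * f := by
    rw [← Nat.mul_add, hchoose]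
  omega

theorem padicValNat_choose_add_padicValNat_le_log {n k : ℕ} (hk0 : k ≠ 0) (hkn : k ≤ n) :
    padicValNat p (n.choose k) + padicValNat p k ≤ log p n := by
  rw [padicValNat_choose hkn (lt_add_one _)]
  have hcarries : {i ∈ Finset.Ico 1 (log p n + 1) | p ^ i ≤ k % p ^ i + (n - k) % p ^ i} ⊆
      Finset.Ico (padicValNat p k + 1) (log p n + 1) := by
    intro i hi
    simp only [Finset.mem_filter, Finset.mem_Ico] at hi ⊢
    refine ⟨?_, hi.1.2⟩
    by_contra! hik
    have hdvd : p ^ i ∣ k := (pow_dvd_pow p (by omega)).trans pow_padicValNat_dvd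
    have := Nat.mod_lt (n - k) (pow_pos hp.out.pos i)
    rw [Nat.mod_eq_zero_of_dvd hdvd] at hi
    omega
  have := Finset.card_le_card hcarries
  simp only [card_Ico] at this
  have : padicValNat p k ≤ log p n := le_log_of_pow_le hp.out.one_lt
    ((le_of_dvd (by omega) pow_padicValNat_dvd).trans hkn)
  omega

theorem padicValNat_choose_mul_prime_pow (f : ℕ) {n k : ℕ} (hkn : k ≤ n) :
    padicValNat p ((n * p ^ f).choose (k * p ^ f)) = padicValNat p (n.choose k) := by
  obtain ⟨m, rfl⟩ := exists_add_of_le hkn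
  have hscaled := sub_one_mul_padicValNat_choose_add_digits_sum (p := p) (p ^ f * m) (p ^ f * k)
  have horig := sub_one_mul_padicValNat_choose_add_digits_sum (p := p) m k
  simp only [← Nat.mul_add, digits_sum_base_pow_mul hp.out.one_lt] at hscaled
  rw [add_comm k m, mul_comm, mul_comm k]
  have : 0 < p - 1 := by have := hp.out.two_le; omega
  exact Nat.eq_of_mul_eq_mul_left this (by omega)

theorem sub_one_mul_padicValNat_choose_pow_mul_add {f A B u : ℕ} (hu0 : u ≠ 0)
    (hu : u < p ^ f) :
    (p - 1) * padicValNat p ((p ^ f * (A + B + 1)).choose (p ^ f * A + u)) +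
        (p.digits (A + B + 1)).sum + (p - 1) * padicValNat p u =
      (p.digits A).sum + (p.digits B).sum + (p - 1) * f + 1 := by
  have hp1 := hp.out.one_lt
  have hsplit : p ^ f * (A + B + 1) = (p ^ f * B + (p ^ f - u)) + (p ^ f * A + u) := by
    rw [Nat.mul_add, Nat.mul_add, mul_one]
    omega
  have hkummer := sub_one_mul_padicValNat_choose_add_digits_sum (p := p)
    (p ^ f * B + (p ^ f - u)) (p ^ f * A + u)
  rw [← hsplit, digits_sum_base_pow_mul hp1, digits_sum_base_pow_mul_add hp1 _ hu,
    digits_sum_base_pow_mul_add hp1 _ (by omega : p ^ f - u < p ^ f)] at hkummer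
  have := digits_sum_add_digits_sum_pow_sub (p := p) hu0 hu.le
  omega

end Kummer

theorem padicValNat_add_eq_left {p : ℕ} [Fact p.Prime] {a b : ℕ} (ha : a ≠ 0)
    (hb : p ^ (padicValNat p a + 1) ∣ b) :
    padicValNat p (a + b) = padicValNat p a := by
  have hab : a + b ≠ 0 := by omega
  refine le_antisymm ?_ ((padicValNat_dvd_iff_le hab).mp
    (dvd_add pow_padicValNat_dvd ((pow_dvd_pow p (le_succ _)).trans hb)))
  by_contra! h
  have := (padicValNat_dvd_iff_le hab).mpr h
  exact pow_succ_padicValNat_not_dvd ha ((Nat.dvd_add_left hb).mp this)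

end Nat

open Nat

theorem exists_mul_sub_one_add_eq_mul_add {q c a : ℕ} (hc : c < q) (ha : a < q)
    (hac : a ≠ c) :
    ∃ A u, a * (q - 1) + c = q * A + u ∧ u ≠ 0 ∧ u < q ∧
      (u ≤ c ∨ A + u = q - 1 + c) := by
  have : a ≤ q * a := Nat.le_mul_of_pos_left a (by omega)
  rcases lt_or_gt_of_ne hac with h | h
  · refine ⟨a, c - a, ?_, by omega, by omega, Or.inl (by omega)⟩
    rw [Nat.mul_sub_one, mul_comm a q]
    omega
  · refine ⟨a - 1, q - a + c, ?_, by omega, by omega, Or.inr (by omega)⟩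
    have : q ≤ q * a := Nat.le_mul_of_pos_right q (by omega)
    rw [Nat.mul_sub_one, Nat.mul_sub_one, mul_comm a q]
    omega

section

variable {p : ℕ} [hp : Fact p.Prime] {f j r : ℕ}

theorem padicValNat_choose_add_lt (hn : r + p ^ j < p ^ f) :
    padicValNat p ((r + p ^ j).choose (p ^ j)) + j < f := by
  have := padicValNat_choose_add_padicValNat_le_log (p := p) (pow_ne_zero j hp.out.ne_zero)
    (le_add_left (p ^ j) r)
  rw [padicValNat.prime_pow] at this
  have := log_lt_of_lt_pow (by have := pow_pos hp.out.pos j; omega) hn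
  omega

theorem padicValNat_choose_lt_padicValNat_choose_pow_mul_add {A u : ℕ}
    (hn : r + p ^ j < p ^ f) (hA : A < r + p ^ j) (hu0 : u ≠ 0) (hu : u < p ^ f)
    (hAu : u ≤ p ^ j ∨ A + u = p ^ f - 1 + p ^ j) :
    padicValNat p ((r + p ^ j).choose (p ^ j)) <
      padicValNat p ((p ^ f * (r + p ^ j)).choose (p ^ f * A + u)) := by
  have hp1 := hp.out.one_lt
  obtain ⟨B, hB⟩ : ∃ B, r + p ^ j = A + B + 1 := ⟨r + p ^ j - A - 1, by omega⟩
  have hkey := sub_one_mul_padicValNat_choose_pow_mul_add (p := p) (A := A) (B := B) hu0 hu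
  rw [← hB] at hkey
  set t := padicValNat p ((r + p ^ j).choose (p ^ j))
  set v := padicValNat p u
  have ht : (p - 1) * t + (p.digits (r + p ^ j)).sum = 1 + (p.digits r).sum := by
    simpa [digits_sum_base_pow hp1] using
      sub_one_mul_padicValNat_choose_add_digits_sum (p := p) r (p ^ j)
  have htj : t + j < f := padicValNat_choose_add_lt hn
  have hpv : p ^ v ≤ u := le_of_dvd (by omega) pow_padicValNat_dvd
  have hvf : v < f := (pow_lt_pow_iff_right₀ hp1).mp (hpv.trans_lt hu)
  have hp0 : 0 < p - 1 := by omega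
  refine Nat.lt_of_mul_lt_mul_left (a := p - 1) ?_
  by_cases hvt : v + t + 1 ≤ f
  · have hsub : (p.digits (r + p ^ j)).sum ≤ (p.digits A).sum + (p.digits B).sum + 1 := by
      rw [hB]
      have := digits_sum_add_le (p := p) (A + B) 1
      have := digits_sum_add_le (p := p) A B
      rw [digits_of_lt p 1 one_ne_zero hp1, List.sum_singleton] at *
      omega
    have := Nat.mul_le_mul_left (p - 1) hvt
    rw [Nat.mul_add, Nat.mul_add, mul_one] at this
    omega
  · have hpjv : p ^ j < p ^ v := pow_lt_pow_right₀ hp1 (by omega)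
    have hAu' : A + u = p ^ f - 1 + p ^ j := hAu.resolve_left (by omega)
    have hpj0 : 0 < p ^ j := by positivity
    obtain ⟨s, hs⟩ : p ^ v ∣ p ^ f - u :=
      Nat.dvd_sub (pow_dvd_pow p hvf.le) pow_padicValNat_dvd
    have hsA : (p.digits A).sum = (p.digits s).sum + j * (p - 1) := by
      rw [show A = p ^ v * s + (p ^ j - 1) by omega,
        digits_sum_base_pow_mul_add hp1 _ (by omega : p ^ j - 1 < p ^ v),
        digits_sum_base_pow_sub_one hp1]
    have hsr : (p.digits r).sum ≤ (p.digits s).sum + (p.digits B).sum := by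
      have := digits_sum_add_le (p := p) (p ^ v * s) B
      rwa [digits_sum_base_pow_mul hp1, show p ^ v * s + B = r by omega] at this
    have := Nat.mul_lt_mul_of_pos_left hvf hp0
    omega

theorem pow_succ_padicValNat_choose_dvd_choose (hn : r + p ^ j < p ^ f) {a : ℕ}
    (ha : a < p ^ f) (haj : a ≠ p ^ j) :
    p ^ (padicValNat p ((r + p ^ j).choose (p ^ j)) + 1) ∣
      ((r + p ^ j) * p ^ f).choose (a * (p ^ f - 1) + p ^ j) := by
  obtain ⟨A, u, hidx, hu0, hu, hcases⟩ :=
    exists_mul_sub_one_add_eq_mul_add ((le_add_left _ _).trans_lt hn) ha haj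
  rw [hidx, mul_comm (r + p ^ j)]
  rcases lt_or_ge A (r + p ^ j) with hA | hA
  · exact (padicValNat_dvd_iff _ _).mpr
      (Or.inr (padicValNat_choose_lt_padicValNat_choose_pow_mul_add hn hA hu0 hu hcases))
  · have := Nat.mul_le_mul_left (p ^ f) hA
    rw [choose_eq_zero_of_lt (show p ^ f * (r + p ^ j) < p ^ f * A + u by omega)]
    exact dvd_zero _

end

theorem stmt14 {p f : ℕ} (hp : p.Prime) (hf : 1 ≤ f) {j r : ℕ}
    (hj : j ≤ f - 1) (hr : r ≤ p ^ f - 1 - p ^ j) :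
    padicValNat p
        (∑ a ∈ Finset.range (p ^ f),
          ((r + p ^ j) * p ^ f).choose (a * (p ^ f - 1) + p ^ j)) =
      padicValNat p ((r + p ^ j).choose (p ^ j)) := by
  have : Fact p.Prime := ⟨hp⟩
  have hpj : p ^ j < p ^ f := pow_lt_pow_right₀ hp.one_lt (by omega)
  have hn : r + p ^ j < p ^ f := by omega
  have hterm : p ^ j * (p ^ f - 1) + p ^ j = p ^ j * p ^ f := by
    rw [Nat.mul_sub_one, Nat.sub_add_cancel (Nat.le_mul_of_pos_right _ (pow_pos hp.pos f))]
  have hval := padicValNat_choose_mul_prime_pow (p := p) f (le_add_left (p ^ j) r)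
  rw [← Finset.add_sum_erase _ _ (Finset.mem_range.mpr hpj), hterm, ← hval]
  refine padicValNat_add_eq_left (choose_pos (Nat.mul_le_mul_right _ (le_add_left _ _))).ne' ?_
  rw [hval]
  exact Finset.dvd_sum fun a ha => pow_succ_padicValNat_choose_dvd_choose hn
    (Finset.mem_range.mp (Finset.mem_of_mem_erase ha)) (Finset.ne_of_mem_erase ha)
end

section
/- Let p be prime and let x, y, z be nonnegative integers with z = x + y. Write x = x' + x'' and z = z' + z'' where p^n divides x' and z', and 0 ≤ x'', z'' ≤ p^n − 1. Suppose the base-p digits satisfy x_i ≥ z_i for all 1 ≤ i ≤ n−1 and x_0 > z_0, where x'' = Σ x_i p^i and z'' = Σ z_i p^i. Then ν_p(C(z,x)) ≥ n. -/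
/-!
For `1 ≤ i ≤ n` the residues mod `p ^ i` of `x` and `z` are those of `x''` and `z''`, and since
`z₀ < x₀` while no later digit of `z''` exceeds that of `x''`, `z % p ^ i < x % p ^ i`. Since
`z = x + y`, this means a carry out of position `i - 1` in the base-`p` addition `x + y`, so
Kummer's theorem counts at least `n` carries.
-/

namespace Nat

theorem add_mod_eq_mod_of_dvd_left {a b m : ℕ} (h : m ∣ a) : (a + b) % m = b % m := by
  rw [Nat.add_mod, Nat.mod_eq_zero_of_dvd h, zero_add, Nat.mod_mod]

theorem mod_pow_lt_mod_pow_of_digit_le {p a b i : ℕ} (h0 : a % p < b % p)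
    (hdig : ∀ j, 1 ≤ j → j < i → a / p ^ j % p ≤ b / p ^ j % p) (hi : 1 ≤ i) :
    a % p ^ i < b % p ^ i := by
  induction i, hi using Nat.le_induction with
  | base => simpa using h0
  | succ j hj ih =>
    have hlow := ih fun k hk hkj => hdig k hk (hkj.trans j.lt_succ_self)
    have htop := Nat.mul_le_mul_left (p ^ j) (hdig j hj j.lt_succ_self)
    rw [mod_pow_succ, mod_pow_succ]
    omega

theorem le_mod_add_mod_of_add_mod_lt {a b m : ℕ} (h : (a + b) % m < a % m) :
    m ≤ a % m + b % m := by
  by_contra! hlt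
  rw [add_mod_of_add_mod_lt hlt] at h
  omega

end Nat

theorem le_padicValNat_choose_of_carries {p x y n : ℕ} [Fact p.Prime]
    (hcarry : ∀ i, 1 ≤ i → i ≤ n → p ^ i ≤ x % p ^ i + y % p ^ i) :
    n ≤ padicValNat p ((x + y).choose x) := by
  rw [add_comm x y, padicValNat_choose' (b := max (Nat.log p (y + x) + 1) (n + 1)) (by omega)]
  calc n = (Finset.Ico 1 (n + 1)).card := by simp
    _ ≤ _ := Finset.card_le_card fun i hi => by
      rw [Finset.mem_Ico] at hi
      simp only [Finset.mem_filter, Finset.mem_Ico]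
      exact ⟨⟨hi.1, by omega⟩, hcarry i hi.1 (by omega)⟩

theorem stmt15_general {p : ℕ} (hp : p.Prime) {x y z x' x'' z' z'' n : ℕ}
    (hz : z = x + y) (hx : x = x' + x'') (hzz : z = z' + z'')
    (hx' : p ^ n ∣ x') (hz' : p ^ n ∣ z')
    (hdig : ∀ i, 1 ≤ i → i ≤ n - 1 → (z'' / p ^ i) % p ≤ (x'' / p ^ i) % p)
    (h0 : z'' % p < x'' % p) :
    n ≤ padicValNat p (z.choose x) := by
  have : Fact p.Prime := ⟨hp⟩
  subst hz
  refine le_padicValNat_choose_of_carries fun i hi hin => Nat.le_mod_add_mod_of_add_mod_lt ?_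
  have hdvd : p ^ i ∣ p ^ n := pow_dvd_pow p hin
  rw [hzz, Nat.add_mod_eq_mod_of_dvd_left (hdvd.trans hz'), hx,
    Nat.add_mod_eq_mod_of_dvd_left (hdvd.trans hx')]
  exact Nat.mod_pow_lt_mod_pow_of_digit_le h0 (fun j hj hji => hdig j hj (by omega)) hi

theorem stmt15 {p : ℕ} (hp : p.Prime) {x y z x' x'' z' z'' n : ℕ}
    (hz : z = x + y) (hx : x = x' + x'') (hzz : z = z' + z'')
    (hx' : p ^ n ∣ x') (hz' : p ^ n ∣ z')
    (hx'' : x'' ≤ p ^ n - 1) (hz'' : z'' ≤ p ^ n - 1)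
    (hdig : ∀ i, 1 ≤ i → i ≤ n - 1 → (z'' / p ^ i) % p ≤ (x'' / p ^ i) % p)
    (h0 : z'' % p < x'' % p) :
    n ≤ padicValNat p (z.choose x) :=
  stmt15_general hp hz hx hzz hx' hz' hdig h0
end
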